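/- The function E(z,t) = C ρ(z,t)^{-(Q-2)} with Q = m + (α+1)k > 2 satisfies B_α E = 0 at every point (z,t) with z ≠ 0 and (z,t) ≠ (0,0), i.e., it is harmonic for the Baouendi operator away from its pole and the degeneracy set. -/

import Mathlib

/-!
Write `E = f ∘ N` with `N = ρ ^ (2(α+1)) = |z|^(2(α+1)) + (α+1)²|t|²`, which is smooth where
`z ≠ 0`, and `f s = C s^γ`. The chain rule gives `B_α (f ∘ N) = f''(N) |XN|² + f'(N) B_α N`, and a
direct computation gives `|XN|² = 4(α+1)² |z|^(2α) N` and `B_α N = 2(α+1)(Q + 2α) |z|^(2α)`.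
Hence `B_α E = 2Cγ(α+1) |z|^(2α) N^(γ-1) (2(α+1)γ + Q - 2)`, which vanishes for
`γ = -(Q-2)/(2(α+1))`, i.e. for `E = C ρ^(2-Q)`.
-/

open MeasureTheory Real

noncomputable section

variable {m k : ℕ}

abbrev Pt (m k : ℕ) := EuclideanSpace ℝ (Fin m) × EuclideanSpace ℝ (Fin k)

/-- standard basis direction in the `z` variables -/
def ez (i : Fin m) : Pt m k := (EuclideanSpace.single i (1:ℝ), 0)

/-- standard basis direction in the `t` variables -/
def et (j : Fin k) : Pt m k := (0, EuclideanSpace.single j (1:ℝ))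

/-- second partial derivative in direction `v` -/
def pd2 (u : Pt m k → ℝ) (p v : Pt m k) : ℝ :=
  fderiv ℝ (fun q => fderiv ℝ u q v) p v

/-- Laplacian in the `z` variables -/
def lapz (u : Pt m k → ℝ) (p : Pt m k) : ℝ := ∑ i : Fin m, pd2 u p (ez i)

/-- Laplacian in the `t` variables -/
def lapt (u : Pt m k → ℝ) (p : Pt m k) : ℝ := ∑ j : Fin k, pd2 u p (et j)

/-- the Baouendi operator `B_α u = Δ_z u + |z|^{2α} Δ_t u` -/
def Bop (α : ℝ) (u : Pt m k → ℝ) (p : Pt m k) : ℝ :=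
  lapz u p + ‖p.1‖ ^ (2*α) * lapt u p

/-- the generator `Z = Σ z_i ∂_{z_i} + (α+1) Σ t_j ∂_{t_j}` -/
def Zop (α : ℝ) (u : Pt m k → ℝ) (p : Pt m k) : ℝ :=
  fderiv ℝ u p (p.1, (α+1) • p.2)

/-- the intrinsic gauge `ρ` -/
def rho (α : ℝ) (p : Pt m k) : ℝ :=
  (‖p.1‖ ^ (2*(α+1)) + (α+1)^2 * ‖p.2‖^2) ^ (1/(2*(α+1)))

/-- the angle function `ψ = |z|^{2α}/ρ^{2α}` -/
def psi (α : ℝ) (p : Pt m k) : ℝ := ‖p.1‖ ^ (2*α) / rho α p ^ (2*α)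

/-- `|∇_z u|²` -/
def gradzSq (u : Pt m k → ℝ) (p : Pt m k) : ℝ :=
  ∑ i : Fin m, (fderiv ℝ u p (ez i))^2

/-- `|∇_t u|²` -/
def gradtSq (u : Pt m k → ℝ) (p : Pt m k) : ℝ :=
  ∑ j : Fin k, (fderiv ℝ u p (et j))^2

/-- `|Xu|² = |∇_z u|² + |z|^{2α}|∇_t u|²` -/
def XgradSq (α : ℝ) (u : Pt m k → ℝ) (p : Pt m k) : ℝ :=
  gradzSq u p + ‖p.1‖ ^ (2*α) * gradtSq u p

/-- anisotropic dilation `δ_λ(z,t) = (λz, λ^{α+1}t)` -/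
def dil (α l : ℝ) (p : Pt m k) : Pt m k := (l • p.1, (l ^ (α+1)) • p.2)

/-- gauge ball `B_r` -/
def gball (α r : ℝ) : Set (Pt m k) := {p | rho α p < r}

open Filter Topology RealInnerProductSpace

section SecondDerivative

variable {E : Type*} [NormedAddCommGroup E] [NormedSpace ℝ E]

theorem fderiv_fderiv_comp_apply {f f' : ℝ → ℝ} {f'' : ℝ} {g : E → ℝ} {p v : E}
    (hf : ∀ᶠ s in 𝓝 (g p), HasDerivAt f (f' s) s) (hf' : HasDerivAt f' f'' (g p))
    (hg : ∀ᶠ q in 𝓝 p, DifferentiableAt ℝ g q)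
    (hgv : DifferentiableAt ℝ (fun q => fderiv ℝ g q v) p) :
    fderiv ℝ (fun q => fderiv ℝ (f ∘ g) q v) p v =
      f'' * fderiv ℝ g p v ^ 2 + f' (g p) * fderiv ℝ (fun q => fderiv ℝ g q v) p v := by
  have hfirst : (fun q => fderiv ℝ (f ∘ g) q v) =ᶠ[𝓝 p] (f' ∘ g) * fun q => fderiv ℝ g q v := by
    filter_upwards [hg, hg.self_of_nhds.continuousAt.eventually hf] with q hgq hfq
    rw [(hfq.comp_hasFDerivAt q hgq.hasFDerivAt).fderiv]
    simp
  rw [hfirst.fderiv_eq,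
    ((hf'.comp_hasFDerivAt p hg.self_of_nhds.hasFDerivAt).mul hgv.hasFDerivAt).fderiv]
  simp
  ring

end SecondDerivative

theorem Bop_comp {α : ℝ} {f f' : ℝ → ℝ} {f'' : ℝ} {g : Pt m k → ℝ} {p : Pt m k}
    (hf : ∀ᶠ s in 𝓝 (g p), HasDerivAt f (f' s) s) (hf' : HasDerivAt f' f'' (g p))
    (hg : ∀ᶠ q in 𝓝 p, DifferentiableAt ℝ g q)
    (hgv : ∀ v, DifferentiableAt ℝ (fun q => fderiv ℝ g q v) p) :
    Bop α (f ∘ g) p = f'' * XgradSq α g p + f' (g p) * Bop α g p := by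
  have h := fun v => fderiv_fderiv_comp_apply (v := v) hf hf' hg (hgv v)
  simp only [Bop, lapz, lapt, pd2, XgradSq, gradzSq, gradtSq, h, Finset.sum_add_distrib,
    ← Finset.mul_sum]
  ring

theorem hasFDerivAt_norm_rpow_of_ne_zero {F : Type*} [NormedAddCommGroup F]
    [InnerProductSpace ℝ F] {x : F} (hx : x ≠ 0) (r : ℝ) :
    HasFDerivAt (fun y : F => ‖y‖ ^ r) ((r * ‖x‖ ^ (r - 2)) • innerSL ℝ x) x := by
  have hx2 : ‖x‖ ^ 2 ≠ 0 := by positivity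
  have h := (hasStrictFDerivAt_norm_sq x).hasFDerivAt.rpow_const (p := r / 2) (Or.inl hx2)
  have hfun : (fun y : F => (‖y‖ ^ 2) ^ (r / 2)) = fun y => ‖y‖ ^ r := by
    funext y
    rw [← Real.rpow_natCast, ← Real.rpow_mul (norm_nonneg y)]
    ring_nf
  rw [hfun] at h
  have hpow : (‖x‖ ^ 2) ^ (r / 2 - 1) = ‖x‖ ^ (r - 2) := by
    rw [← Real.rpow_natCast, ← Real.rpow_mul (norm_nonneg x)]
    ring_nf
  refine h.congr_fderiv (ContinuousLinearMap.ext fun w => ?_)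
  simp [hpow]
  ring

theorem sum_inner_single_sq {ι : Type*} [Fintype ι] [DecidableEq ι] (x : EuclideanSpace ℝ ι) :
    ∑ i, ⟪x, EuclideanSpace.single i (1 : ℝ)⟫ ^ 2 = ‖x‖ ^ 2 := by
  simp [EuclideanSpace.inner_single_right, EuclideanSpace.real_norm_sq_eq]

def rhoPow (α : ℝ) (q : Pt m k) : ℝ := ‖q.1‖ ^ (2 * (α + 1)) + (α + 1) ^ 2 * ‖q.2‖ ^ 2

theorem rho_eq_rhoPow_rpow (α : ℝ) (q : Pt m k) : rho α q = rhoPow α q ^ (1 / (2 * (α + 1))) :=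
  rfl

theorem rhoPow_nonneg (α : ℝ) (q : Pt m k) : 0 ≤ rhoPow α q := by
  unfold rhoPow; positivity

section Gauge

variable {α : ℝ}

theorem rhoPow_pos {q : Pt m k} (hq : q.1 ≠ 0) : 0 < rhoPow α q := by
  have : 0 < ‖q.1‖ := norm_pos_iff.2 hq
  unfold rhoPow; positivity

theorem hasFDerivAt_rhoPow {q : Pt m k} (hq : q.1 ≠ 0) :
    HasFDerivAt (rhoPow α)
      ((2 * (α + 1)) • (‖q.1‖ ^ (2 * α) • (innerSL ℝ q.1).comp (.fst ℝ _ _)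
        + (α + 1) • (innerSL ℝ q.2).comp (.snd ℝ _ _))) q := by
  have hz := (hasFDerivAt_norm_rpow_of_ne_zero hq (2 * (α + 1))).comp q (hasFDerivAt_fst (p := q))
  have ht := (hasFDerivAt_snd (p := q)).norm_sq.const_mul ((α + 1) ^ 2)
  refine (hz.add ht).congr_fderiv (ContinuousLinearMap.ext fun w => ?_)
  simp
  ring_nf

theorem fderiv_rhoPow_apply {q : Pt m k} (hq : q.1 ≠ 0) (v : Pt m k) :
    fderiv ℝ (rhoPow α) q v =
      2 * (α + 1) * (‖q.1‖ ^ (2 * α) * ⟪q.1, v.1⟫ + (α + 1) * ⟪q.2, v.2⟫) := by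
  simp [(hasFDerivAt_rhoPow hq).fderiv]
  ring

theorem hasFDerivAt_fderiv_rhoPow_apply {p : Pt m k} (hp : p.1 ≠ 0) (v : Pt m k) :
    HasFDerivAt (fun q => fderiv ℝ (rhoPow α) q v)
      ((2 * (α + 1)) • ((2 * α * ‖p.1‖ ^ (2 * α - 2) * ⟪p.1, v.1⟫) •
          (innerSL ℝ p.1).comp (.fst ℝ _ _)
        + ‖p.1‖ ^ (2 * α) • (innerSL ℝ v.1).comp (.fst ℝ _ _)
        + (α + 1) • (innerSL ℝ v.2).comp (.snd ℝ _ _))) p := by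
  have hev : (fun q => fderiv ℝ (rhoPow α) q v) =ᶠ[𝓝 p] fun q : Pt m k =>
      2 * (α + 1) * (‖q.1‖ ^ (2 * α) * ⟪v.1, q.1⟫ + (α + 1) * ⟪v.2, q.2⟫) := by
    filter_upwards [(isOpen_ne_fun continuous_fst continuous_const).mem_nhds hp] with q hq
    rw [fderiv_rhoPow_apply hq v, real_inner_comm v.1, real_inner_comm v.2]
  have hnorm := (hasFDerivAt_norm_rpow_of_ne_zero hp (2 * α)).comp p (hasFDerivAt_fst (p := p))
  have hz := ((innerSL ℝ v.1).comp (.fst ℝ _ _ : Pt m k →L[ℝ] _)).hasFDerivAt (x := p)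
  have ht := ((innerSL ℝ v.2).comp (.snd ℝ _ _ : Pt m k →L[ℝ] _)).hasFDerivAt (x := p)
  refine ((((hnorm.mul hz).add (ht.const_mul (α + 1))).const_mul (2 * (α + 1))).congr_fderiv
    (ContinuousLinearMap.ext fun w => ?_)).congr_of_eventuallyEq hev
  simp [real_inner_comm]
  ring

theorem pd2_rhoPow {p : Pt m k} (hp : p.1 ≠ 0) (v : Pt m k) :
    pd2 (rhoPow α) p v = 2 * (α + 1) *
      (2 * α * ‖p.1‖ ^ (2 * α - 2) * ⟪p.1, v.1⟫ ^ 2 + ‖p.1‖ ^ (2 * α) * ‖v.1‖ ^ 2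
        + (α + 1) * ‖v.2‖ ^ 2) := by
  simp [pd2, (hasFDerivAt_fderiv_rhoPow_apply hp v).fderiv]
  ring

theorem XgradSq_rhoPow {p : Pt m k} (hp : p.1 ≠ 0) :
    XgradSq α (rhoPow α) p = 4 * (α + 1) ^ 2 * ‖p.1‖ ^ (2 * α) * rhoPow α p := by
  have hsplit : ‖p.1‖ ^ (2 * (α + 1)) = ‖p.1‖ ^ (2 * α) * ‖p.1‖ ^ 2 := by
    rw [mul_add, mul_one, Real.rpow_add (norm_pos_iff.2 hp), Real.rpow_two]
  simp only [XgradSq, gradzSq, gradtSq, fderiv_rhoPow_apply hp, ez, et, inner_zero_right,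
    mul_zero, add_zero, zero_add, mul_pow, ← Finset.mul_sum, sum_inner_single_sq]
  rw [rhoPow, hsplit]
  ring

theorem Bop_rhoPow {p : Pt m k} (hp : p.1 ≠ 0) :
    Bop α (rhoPow α) p = 2 * (α + 1) * (m + 2 * α + (α + 1) * k) * ‖p.1‖ ^ (2 * α) := by
  have hsplit : ‖p.1‖ ^ (2 * α - 2) * ‖p.1‖ ^ 2 = ‖p.1‖ ^ (2 * α) := by
    rw [Real.rpow_sub (norm_pos_iff.2 hp), Real.rpow_two, div_mul_cancel₀]
    positivity
  simp only [Bop, lapz, lapt, pd2_rhoPow hp, ez, et, inner_zero_right, PiLp.norm_single,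
    norm_one, norm_zero, one_pow, mul_zero, add_zero, zero_add, ne_eq, OfNat.ofNat_ne_zero,
    not_false_eq_true, zero_pow, ← Finset.mul_sum, Finset.sum_add_distrib, sum_inner_single_sq,
    Finset.sum_const, Finset.card_univ, Fintype.card_fin, nsmul_eq_mul]
  rw [← hsplit]
  ring

theorem Bop_rpow_rhoPow {p : Pt m k} (hp : p.1 ≠ 0) (C γ : ℝ) :
    Bop α ((fun s => C * s ^ γ) ∘ rhoPow α) p = 2 * C * γ * (α + 1) * ‖p.1‖ ^ (2 * α) *
      rhoPow α p ^ (γ - 1) * (2 * (α + 1) * γ + m + (α + 1) * k - 2) := by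
  have hN := rhoPow_pos (α := α) hp
  have hf : ∀ᶠ s in 𝓝 (rhoPow α p), HasDerivAt (fun s => C * s ^ γ) (C * (γ * s ^ (γ - 1))) s := by
    filter_upwards [lt_mem_nhds hN] with s hs
    exact (Real.hasDerivAt_rpow_const (Or.inl hs.ne')).const_mul C
  have hf' : HasDerivAt (fun s => C * (γ * s ^ (γ - 1)))
      (C * (γ * ((γ - 1) * rhoPow α p ^ (γ - 1 - 1)))) (rhoPow α p) :=
    ((Real.hasDerivAt_rpow_const (Or.inl hN.ne')).const_mul γ).const_mul C
  have hg : ∀ᶠ q in 𝓝 p, DifferentiableAt ℝ (rhoPow α) q := by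
    filter_upwards [(isOpen_ne_fun continuous_fst continuous_const).mem_nhds hp] with q hq
    exact (hasFDerivAt_rhoPow hq).differentiableAt
  have hNpow : rhoPow α p ^ (γ - 1 - 1) * rhoPow α p = rhoPow α p ^ (γ - 1) := by
    rw [← Real.rpow_add_one hN.ne']; ring_nf
  rw [Bop_comp hf hf' hg fun v => (hasFDerivAt_fderiv_rhoPow_apply hp v).differentiableAt,
    XgradSq_rhoPow hp, Bop_rhoPow hp]
  linear_combination (4 * C * γ * (γ - 1) * (α + 1) ^ 2 * ‖p.1‖ ^ (2 * α)) * hNpow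

end Gauge

theorem fundamental_solution_harmonic_general (m k : ℕ) (α C : ℝ) (hα : 0 < α)
    (p : Pt m k) (hz : p.1 ≠ 0) :
    Bop α (fun q => C * rho α q ^ (-((m : ℝ) + (α+1)*k - 2))) p = 0 := by
  have hα1 : 0 < α + 1 := by linarith
  set γ : ℝ := -((m : ℝ) + (α + 1) * k - 2) / (2 * (α + 1)) with hγ
  have hE : (fun q : Pt m k => C * rho α q ^ (-((m : ℝ) + (α + 1) * k - 2))) =
      (fun s => C * s ^ γ) ∘ rhoPow α := by
    funext q
    rw [Function.comp_apply, rho_eq_rhoPow_rpow, ← Real.rpow_mul (rhoPow_nonneg α q), hγ]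
    ring_nf
  have hγ_crit : 2 * (α + 1) * γ + m + (α + 1) * k - 2 = 0 := by
    rw [hγ]; field_simp; ring
  rw [hE, Bop_rpow_rhoPow hz, hγ_crit, mul_zero]

theorem fundamental_solution_harmonic (m k : ℕ) (α C : ℝ) (hα : 0 < α)
    (hQ : 2 < (m : ℝ) + (α+1)*k) (p : Pt m k) (hz : p.1 ≠ 0) :
    Bop α (fun q => C * rho α q ^ (-((m : ℝ) + (α+1)*k - 2))) p = 0 :=
  fundamental_solution_harmonic_general m k α C hα p hz
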